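/- arXiv:2202.04695 — 2 statements merged into one kernel-verified Lean document; each statement's English description precedes it below -/
import Mathlib

section
/- Let $(B_n)$ be a sequence of unital C*-algebras with tracial states, $B_\infty = \prod_n B_n/\bigoplus_n B_n$, and $\varphi, \psi : A \to B_\infty$ induced by ucp maps $\varphi_n, \psi_n : A \to B_n$. If $\tau \circ \varphi = \tau \circ \psi$ for every limit trace $\tau$, then for every finite set $\mathcal H \subset A$ and $\gamma > 0$ there exists $n_0$ such that for all $n \geq n_0$ and all $\tau \in T(B_n)$, $|\tau(\varphi_n(a)) - \tau(\psi_n(a))| < \gamma$ for all $a \in \mathcal H$. -/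
open Filter

/-- A tracial state on a unital complex normed star algebra. -/
def IsTracialState {B : Type*} [NormedRing B] [NormedAlgebra ℂ B] [StarRing B]
    (τ : B →L[ℂ] ℂ) : Prop :=
  τ 1 = 1 ∧ (∀ a b : B, τ (a * b) = τ (b * a)) ∧
    ∀ a : B, 0 ≤ (τ (star a * a)).re ∧ (τ (star a * a)).im = 0

/-- Complete positivity of a linear map between complex star algebras. -/
def IsCompletelyPositive {A B : Type*} [NormedRing A] [NormedAlgebra ℂ A] [StarRing A]
    [NormedRing B] [NormedAlgebra ℂ B] [StarRing B] [PartialOrder B]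
    (φ : A →L[ℂ] B) : Prop :=
  ∀ (k : ℕ) (a : Fin k → A) (b : Fin k → B),
    0 ≤ ∑ i, ∑ j, star (b i) * φ (star (a i) * a j) * b j

/-- Forward direction of Lemma (SequenceAlgFacts)(iii): if `τ ∘ φ = τ ∘ ψ` for every limit
trace `τ` on `∏ Bₙ / ⊕ Bₙ` (expressed via ultrafilter limits on lifts), then the traces of
`φₙ` and `ψₙ` eventually agree uniformly on finite sets. -/
theorem stmt6 {A : Type*} [NormedRing A] [NormedAlgebra ℂ A] [StarRing A]
    [PartialOrder A] [StarOrderedRing A]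
    (B : ℕ → Type*) [∀ n, NormedRing (B n)] [∀ n, NormedAlgebra ℂ (B n)]
    [∀ n, StarRing (B n)] [∀ n, PartialOrder (B n)] [∀ n, StarOrderedRing (B n)]
    (htraces : ∀ n, ∃ τ : B n →L[ℂ] ℂ, IsTracialState τ)
    (φ ψ : ∀ n, A →L[ℂ] B n)
    (hφ1 : ∀ n, φ n 1 = 1) (hψ1 : ∀ n, ψ n 1 = 1)
    (hφcp : ∀ n, IsCompletelyPositive (φ n)) (hψcp : ∀ n, IsCompletelyPositive (ψ n))
    (H : ∀ ω : Ultrafilter ℕ, (ω : Filter ℕ) ≤ Filter.cofinite →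
      ∀ τ : ∀ n, B n →L[ℂ] ℂ, (∀ n, IsTracialState (τ n)) →
      ∀ a : A, Tendsto (fun n => τ n (φ n a) - τ n (ψ n a)) (ω : Filter ℕ) (nhds 0)) :
    ∀ (s : Finset A) (γ : ℝ), 0 < γ → ∃ n0 : ℕ, ∀ n ≥ n0,
      ∀ τ : B n →L[ℂ] ℂ, IsTracialState τ → ∀ a ∈ s, ‖τ (φ n a) - τ (ψ n a)‖ < γ := by
  intro s γ hγ
  by_contra hcon
  push_neg at hcon
  set S : A → Set ℕ := fun a =>
    {n | ∃ τ : B n →L[ℂ] ℂ, IsTracialState τ ∧ γ ≤ ‖τ (φ n a) - τ (ψ n a)‖} with hSdef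
  -- the union of bad sets is infinite
  have hbig : (⋃ a ∈ s, S a).Infinite := by
    rw [Set.infinite_iff_frequently_cofinite, Nat.cofinite_eq_atTop, frequently_atTop]
    intro n0
    obtain ⟨n, hn, τ, hτ, a, ha, hge⟩ := hcon n0
    exact ⟨n, hn, Set.mem_biUnion ha ⟨τ, hτ, hge⟩⟩
  -- hence some S a is infinite
  have : ∃ a ∈ s, (S a).Infinite := by
    by_contra h
    push_neg at h
    exact hbig (Set.Finite.biUnion s.finite_toSet h)
  obtain ⟨a, has, hSinf⟩ := this
  -- build a free ultrafilter concentrated on S a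
  have hne : (Filter.cofinite ⊓ Filter.principal (S a)).NeBot := by
    rw [Filter.inf_principal_neBot_iff]
    intro U hU
    have : (S a \ Uᶜ).Infinite := hSinf.diff hU
    obtain ⟨x, hx⟩ := this.nonempty
    exact ⟨x, not_not.mp hx.2, hx.1⟩
  let ω : Ultrafilter ℕ := @Ultrafilter.of ℕ (Filter.cofinite ⊓ Filter.principal (S a)) hne
  have hωle : (ω : Filter ℕ) ≤ Filter.cofinite :=
    le_trans (Ultrafilter.of_le _) inf_le_left
  have hSω : S a ∈ (ω : Filter ℕ) :=
    le_trans (Ultrafilter.of_le _) inf_le_right (Filter.mem_principal_self _)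
  classical
  -- define the trace sequence
  let τ : ∀ n, B n →L[ℂ] ℂ := fun n =>
    if h : n ∈ S a then h.choose else (htraces n).choose
  have hτ : ∀ n, IsTracialState (τ n) := by
    intro n
    by_cases h : n ∈ S a
    · simp only [τ, dif_pos h]; exact h.choose_spec.1
    · simp only [τ, dif_neg h]; exact (htraces n).choose_spec
  have hτge : ∀ n ∈ S a, γ ≤ ‖τ n (φ n a) - τ n (ψ n a)‖ := by
    intro n h
    simp only [τ, dif_pos h]
    exact h.choose_spec.2
  have htend := H ω hωle τ hτ a
  have hev : ∀ᶠ n in (ω : Filter ℕ), ‖τ n (φ n a) - τ n (ψ n a)‖ < γ := by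
    have := htend (Metric.ball_mem_nhds 0 hγ)
    filter_upwards [this] with n hn
    simpa [dist_eq_norm] using hn
  have : ∀ᶠ n in (ω : Filter ℕ), False := by
    filter_upwards [hev, hSω] with n h1 h2
    exact absurd (hτge n h2) (not_le.mpr h1)
  exact this.exists.choose_spec
end

section
/- Let $(m_n)$ be a sequence of natural numbers, $B_\infty = \prod_n M_{m_n}/\bigoplus_n M_{m_n}$, $A$ a C*-algebra, and $\varphi : A \to B_\infty$ a positive map induced by a sequence of positive maps $\varphi_n : A \to M_{m_n}$. Fix $a \in A_+$ with lift $(b_n)_n$, $b_n = \varphi_n(a)$. If there exist limit traces $\tau_k$ on $B_\infty$ with $\tau_k(\varphi(a)) \to 0$, then there exists a limit trace $\tau_\omega$ on $B_\infty$ with $\tau_\omega(\varphi(a)) = 0$. -/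
open Filter
open scoped ComplexOrder

/-- Infimum-attainment for limit traces (from the proof of Theorem LinReformulated):
if `a ∈ A₊` and some sequence of limit traces on `∏ Mₘₙ / ⊕ Mₘₙ` sends `φ(a)` to values
tending to `0`, then a single limit trace sends `φ(a)` to `0`.  Limit traces are expressed
via ultrafilter limits of the normalized matrix traces of the lift `bₙ = φₙ(a)`. -/
theorem stmt7 {A : Type*} [NormedRing A] [NormedAlgebra ℂ A] [StarRing A]
    [PartialOrder A] [StarOrderedRing A]
    (m : ℕ → ℕ) (hm : ∀ n, 0 < m n)
    (φ : ∀ n, A →L[ℂ] Matrix (Fin (m n)) (Fin (m n)) ℂ)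
    (hφpos : ∀ n, ∀ x : A, 0 ≤ x → (φ n x).PosSemidef)
    (a : A) (ha : 0 ≤ a)
    (H : ∃ (ω : ℕ → Ultrafilter ℕ) (L : ℕ → ℝ),
      (∀ k, ((ω k : Filter ℕ) ≤ Filter.cofinite)) ∧
      (∀ k, Tendsto (fun n => ((φ n a).trace).re / (m n : ℝ)) (ω k : Filter ℕ) (nhds (L k))) ∧
      Tendsto L atTop (nhds 0)) :
    ∃ ω : Ultrafilter ℕ, (ω : Filter ℕ) ≤ Filter.cofinite ∧
      Tendsto (fun n => ((φ n a).trace).re / (m n : ℝ)) (ω : Filter ℕ) (nhds 0) := by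
  obtain ⟨ω, L, hωcof, hωL, hL⟩ := H
  set f : ℕ → ℝ := fun n => ((φ n a).trace).re / (m n : ℝ) with hf
  -- key claim: for each ε > 0, the set {n | |f n| < ε} is infinite
  have key : ∀ ε : ℝ, 0 < ε → {n | |f n| < ε}.Infinite := by
    intro ε hε
    obtain ⟨k, hk⟩ := (hL.eventually (Metric.ball_mem_nhds (0 : ℝ) (half_pos hε))).exists
    have hLk : |L k| < ε / 2 := by simpa [Real.dist_eq] using hk
    have hT : ∀ᶠ n in (ω k : Filter ℕ), |f n - L k| < ε / 2 := by
      have := (hωL k).eventually (Metric.ball_mem_nhds (L k) (half_pos hε))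
      simpa [Real.dist_eq] using this
    have hT' : ∀ᶠ n in (ω k : Filter ℕ), |f n| < ε := by
      filter_upwards [hT] with n hn
      calc |f n| ≤ |f n - L k| + |L k| := by
            simpa using abs_add_le (f n - L k) (L k)
        _ < ε / 2 + ε / 2 := add_lt_add hn hLk
        _ = ε := add_halves ε
    have hfreq : ∃ᶠ n in Filter.cofinite, |f n| < ε :=
      (hT'.frequently).filter_mono (hωcof k)
    exact Filter.frequently_cofinite_iff_infinite.mp hfreq
  -- the filter cofinite ⊓ comap f (nhds 0) is nontrivial
  have hne : (Filter.cofinite ⊓ Filter.comap f (nhds 0)).NeBot := by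
    rw [Filter.inf_neBot_iff]
    intro s hs t ht
    obtain ⟨U, hU, hUt⟩ := ht
    obtain ⟨ε, hε, hball⟩ := Metric.mem_nhds_iff.mp hU
    have hinf : {n | |f n| < ε}.Infinite := key ε hε
    obtain ⟨n, hn⟩ := (hinf.diff hs).nonempty
    refine ⟨n, Set.not_notMem.mp hn.2, hUt ?_⟩
    exact hball (by simpa [Real.dist_eq] using hn.1)
  obtain ⟨u, hu⟩ := Ultrafilter.exists_le (Filter.cofinite ⊓ Filter.comap f (nhds 0))
  exact ⟨u, le_trans hu inf_le_left, Filter.tendsto_iff_comap.mpr (le_trans hu inf_le_right)⟩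
end
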